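/- arXiv:1806.06141 — 3 statements merged into one kernel-verified Lean document; each statement's English description precedes it below -/
import Mathlib

section
/- Let T, S be bounded operators on a complex Hilbert space H and let S = V|S| be the polar decomposition of S. Then | |T|·|S^*| | = V |TS| V^* and V |TS| = | |T|·|S^*| | V. -/
open ContinuousLinearMap

variable {H : Type*} [NormedAddCommGroup H] [InnerProductSpace ℂ H] [CompleteSpace H]

/-- The absolute value `|T| = (T^*T)^(1/2)` of a bounded operator on a complex
Hilbert space, defined via the continuous functional calculus. -/
noncomputable def absOp (T : H →L[ℂ] H) : H →L[ℂ] H :=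
  cfc Real.sqrt (adjoint T * T)

/-- The orthogonal projection of `H` onto the closure of the range of `T`,
regarded as an operator on `H`. -/
noncomputable def rangeProjOp (T : H →L[ℂ] H) : H →L[ℂ] H :=
  (LinearMap.range (T : H →ₗ[ℂ] H)).topologicalClosure.subtypeL ∘L
    Submodule.orthogonalProjectionOnto (LinearMap.range (T : H →ₗ[ℂ] H)).topologicalClosure

/-- `U` is a partial isometry: `U^*U` is an orthogonal projection
(a self-adjoint idempotent). -/
def IsPartialIsometryOp (U : H →L[ℂ] H) : Prop :=
  IsSelfAdjoint (adjoint U * U) ∧ (adjoint U * U) * (adjoint U * U) = adjoint U * U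

/-- `T = U|T|` is the polar decomposition of `T`: `U` is a partial isometry and
`U^*U` is the orthogonal projection onto the closure of the range of `T^*`. -/
def IsPolarDecompositionOp (T U : H →L[ℂ] H) : Prop :=
  T = U * absOp T ∧ IsPartialIsometryOp U ∧ adjoint U * U = rangeProjOp (adjoint T)

/-!
For a projection `p`, `a*pa = a*a` forces `((1 - p)a)*((1 - p)a) = 0`, hence `pa = a` by the
C*-identity. For `S = V|S|` this shows that `V*V` acts as the identity on `|S|`, hence also on
`|TS|`, whose square `S*T*TS` ends in `S = S V*V`. Then `(V|S|V*)² = SS*` and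
`(V|TS|V*)² = V|S|V*·|T|²·V|S|V*`, so uniqueness of positive square roots gives
`|S*| = V|S|V*` and `| |T||S*| | = V|TS|V*`. The second identity is the first multiplied on the
right by `V`, since `|TS| V*V = |TS|`.
-/

namespace IsStarProjection

variable {R : Type*} [NonUnitalNormedRing R] [StarRing R] [CStarRing R] {p a : R}

theorem mul_eq_right_of_star_mul_mul_eq (hp : IsStarProjection p)
    (h : star a * p * a = star a * a) : p * a = a := by
  have hp' : star p = p := hp.isSelfAdjoint.star_eq
  have hpp : p * p = p := hp.isIdempotentElem.eq
  refine (sub_eq_zero.mp <| (CStarRing.star_mul_self_eq_zero_iff _).mp ?_).symm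
  calc star (a - p * a) * (a - p * a)
      = star a * a - star a * p * a - star a * p * a + star a * (p * p) * a := by
        rw [star_sub, star_mul, hp']; noncomm_ring
    _ = 0 := by rw [hpp, h]; abel

theorem mul_eq_left_of_star_mul_self_mul_eq (hp : IsStarProjection p)
    (h : star a * a * p = star a * a) : a * p = a := by
  have hp' : star p = p := hp.isSelfAdjoint.star_eq
  have h' : p * (star a * a) = star a * a := by
    simpa only [star_mul, star_star, hp'] using congrArg star h
  refine (sub_eq_zero.mp <| (CStarRing.star_mul_self_eq_zero_iff _).mp ?_).symm
  calc star (a - a * p) * (a - a * p)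
      = star a * a - star a * a * p - p * (star a * a) + p * (star a * a * p) := by
        rw [star_sub, star_mul, hp']; noncomm_ring
    _ = 0 := by rw [h, h']; abel

end IsStarProjection

namespace CFC

variable {A : Type*} [CStarAlgebra A] [PartialOrder A] [StarOrderedRing A]

lemma star_abs (a : A) : star (abs a) = abs a := (abs_nonneg a).isSelfAdjoint.star_eq

section PolarDecomposition

variable {s v : A} (hs : s = v * abs s) (hv : IsStarProjection (star v * v))
include hs hv

lemma star_mul_self_mul_abs : star v * v * abs s = abs s := by
  refine hv.mul_eq_right_of_star_mul_mul_eq ?_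
  calc star (abs s) * (star v * v) * abs s = star (v * abs s) * (v * abs s) := by
        rw [star_mul, star_abs]; noncomm_ring
    _ = star (abs s) * abs s := by rw [← hs, star_abs, abs_mul_abs]

lemma abs_mul_star_mul_self : abs s * (star v * v) = abs s := by
  simpa only [star_mul, star_star, star_abs] using congrArg star (star_mul_self_mul_abs hs hv)

lemma abs_star_eq_mul_abs_mul_star : abs (star s) = v * abs s * star v := by
  refine sqrt_unique ?_ (star_right_conjugate_nonneg (abs_nonneg s) v)
  calc v * abs s * star v * (v * abs s * star v)
      = v * (abs s * (star v * v)) * abs s * star v := by noncomm_ring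
    _ = v * abs s * star (v * abs s) := by
      rw [abs_mul_star_mul_self hs hv, star_mul, star_abs]; noncomm_ring
    _ = star (star s) * star s := by rw [← hs, star_star]

lemma abs_mul_mul_star_mul_self (a : A) : abs (a * s) * (star v * v) = abs (a * s) := by
  refine hv.mul_eq_left_of_star_mul_self_mul_eq ?_
  have hsv : s * (star v * v) = s := by rw [hs, mul_assoc, abs_mul_star_mul_self hs hv]
  rw [star_abs, abs_mul_abs, mul_assoc, mul_assoc a, hsv]

theorem abs_abs_mul_abs_star (a : A) :
    abs (abs a * abs (star s)) = v * abs (a * s) * star v := by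
  refine sqrt_unique ?_ (star_right_conjugate_nonneg (abs_nonneg _) v)
  calc v * abs (a * s) * star v * (v * abs (a * s) * star v)
      = v * (abs (a * s) * (star v * v)) * abs (a * s) * star v := by noncomm_ring
    _ = v * (star (a * s) * (a * s)) * star v := by
      rw [abs_mul_mul_star_mul_self hs hv a, ← abs_mul_abs]; noncomm_ring
    _ = v * abs s * star v * (star a * a) * (v * abs s * star v) := by
      conv_lhs => rw [hs]
      rw [star_mul, star_mul, star_abs]; noncomm_ring
    _ = star (abs a * abs (star s)) * (abs a * abs (star s)) := by
      rw [← abs_star_eq_mul_abs_mul_star hs hv, ← abs_mul_abs a, star_mul, star_abs, star_abs]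
      noncomm_ring

theorem mul_abs_mul_eq_abs_abs_mul_abs_star_mul (a : A) :
    v * abs (a * s) = abs (abs a * abs (star s)) * v := by
  calc v * abs (a * s) = v * (abs (a * s) * (star v * v)) := by
        rw [abs_mul_mul_star_mul_self hs hv a]
    _ = abs (abs a * abs (star s)) * v := by
        rw [abs_abs_mul_abs_star hs hv a]; noncomm_ring

end PolarDecomposition

end CFC

lemma absOp_eq_cfcAbs (T : H →L[ℂ] H) : absOp T = CFC.abs T := by
  rw [absOp, CFC.abs, CFC.sqrt_eq_real_sqrt _ (star_mul_self_nonneg T), cfcₙ_eq_cfc,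
    star_eq_adjoint]

/-- If `S = V|S|` is the polar decomposition of `S`, then
`| |T|·|S^*| | = V |TS| V^*` and `V |TS| = | |T|·|S^*| | V`. -/
theorem absOp_mul_absOp_adjoint_eq (T S V : H →L[ℂ] H)
    (hS : IsPolarDecompositionOp S V) :
    absOp (absOp T * absOp (adjoint S)) = V * absOp (T * S) * adjoint V ∧
    V * absOp (T * S) = absOp (absOp T * absOp (adjoint S)) * V := by
  obtain ⟨hSV, ⟨hVsa, hVidem⟩, -⟩ := hS
  simp only [absOp_eq_cfcAbs, ← star_eq_adjoint] at hSV hVsa hVidem ⊢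
  have hV : IsStarProjection (star V * V) := ⟨hVidem, hVsa⟩
  exact ⟨CFC.abs_abs_mul_abs_star hSV hV T,
    CFC.mul_abs_mul_eq_abs_abs_mul_abs_star_mul hSV hV T⟩
end

section
/- Let T = U|T| and S = V|S| be the polar decompositions of bounded operators T, S on a complex Hilbert space H, and let |T|·|S^*| = W | |T|·|S^*| | be the polar decomposition of |T|·|S^*|. Then TS = (U W V)|TS| is the polar decomposition of TS; that is, U W V is a partial isometry and (U W V)^*(U W V) equals the orthogonal projection onto the closure of the range of (TS)^*. -/
/-! Write `a = |T|`, `c = |S^*|` and `A = |ac|`. From `S = V|S|` one gets `|S^*| = V|S|V^*`, hence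
`S = cV` and `(TS)^*(TS) = V^*(ca²c)V = V^*A²V`. The closure of the range of `A` is that of
`ca`, which `VV^*` fixes, so `|TS| = V^*AV` and `TS = UacV = UWAV = UWV|TS|`. Since `W` maps the
range of `A` into that of `a`, on which `U^*U` is the identity, `(UWV)^*(UWV) = V^*(W^*W)V`, the
conjugate by `V` of the projection onto the closure of the range of `A`; this is the projection
onto the closure of the range of `V^*AV = |TS|`, i.e. of `(TS)^*`. -/

open ContinuousLinearMap

variable {H : Type*} [NormedAddCommGroup H] [InnerProductSpace ℂ H] [CompleteSpace H]

lemma adjoint_mul (A B : H →L[ℂ] H) : adjoint (A * B) = adjoint B * adjoint A :=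
  adjoint_comp A B

lemma absOp_nonneg (T : H →L[ℂ] H) : 0 ≤ absOp T :=
  absOp_eq_cfcAbs T ▸ CFC.abs_nonneg T

lemma adjoint_absOp (T : H →L[ℂ] H) : adjoint (absOp T) = absOp T :=
  (absOp_nonneg T).isSelfAdjoint

lemma absOp_mul_absOp (T : H →L[ℂ] H) : absOp T * absOp T = adjoint T * T :=
  absOp_eq_cfcAbs T ▸ CFC.abs_mul_abs T

lemma absOp_eq_of_mul_self {T B : H →L[ℂ] H} (hB : 0 ≤ B) (h : B * B = adjoint T * T) :
    absOp T = B := by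
  rw [absOp_eq_cfcAbs]
  exact CFC.sqrt_unique h hB

lemma absOp_absOp_mul (X Y : H →L[ℂ] H) : absOp (absOp X * Y) = absOp (X * Y) := by
  refine absOp_eq_of_mul_self (absOp_nonneg _) ?_
  rw [absOp_mul_absOp, adjoint_mul, adjoint_mul, adjoint_absOp]
  simp only [mul_assoc]
  rw [← mul_assoc (absOp X) (absOp X), absOp_mul_absOp, mul_assoc]

lemma ker_absOp (T : H →L[ℂ] H) : (absOp T).ker = T.ker := by
  rw [← ker_adjoint_comp_self (absOp T), ← ker_adjoint_comp_self T]
  exact congrArg (fun X : H →L[ℂ] H ↦ X.ker) ((adjoint_absOp T).symm ▸ absOp_mul_absOp T)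

lemma rangeProjOp_eq_starProjection (B : H →L[ℂ] H) :
    rangeProjOp B = B.range.topologicalClosure.starProjection :=
  rfl

lemma adjoint_rangeProjOp (B : H →L[ℂ] H) : adjoint (rangeProjOp B) = rangeProjOp B :=
  isSelfAdjoint_starProjection _

lemma rangeProjOp_mul_self (B : H →L[ℂ] H) : rangeProjOp B * rangeProjOp B = rangeProjOp B :=
  Submodule.isIdempotentElem_starProjection _

lemma rangeProjOp_mul (B : H →L[ℂ] H) : rangeProjOp B * B = B := by
  ext x
  exact Submodule.starProjection_eq_self_iff.mpr
    (Submodule.le_topologicalClosure _ (LinearMap.mem_range_self _ x))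

lemma rangeProjOp_congr {B C : H →L[ℂ] H}
    (h : B.range.topologicalClosure = C.range.topologicalClosure) :
    rangeProjOp B = rangeProjOp C := by
  simp only [rangeProjOp_eq_starProjection, h]

lemma rangeProjOp_absOp (T : H →L[ℂ] H) : rangeProjOp (absOp T) = rangeProjOp (adjoint T) := by
  refine rangeProjOp_congr ?_
  rw [← orthogonal_ker T, ← ker_absOp, orthogonal_ker, adjoint_absOp]

lemma rangeProjOp_adjoint_mul_absOp (T : H →L[ℂ] H) :
    rangeProjOp (adjoint T) * absOp T = absOp T := by
  rw [← rangeProjOp_absOp, rangeProjOp_mul]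

lemma mul_rangeProjOp_eq_of_mul_eq {X Y B : H →L[ℂ] H} (h : X * B = Y * B) :
    X * rangeProjOp B = Y * rangeProjOp B := by
  have hle : B.range.topologicalClosure ≤ (X - Y).ker := by
    refine Submodule.topologicalClosure_minimal _ ?_ (isClosed_ker (X - Y))
    rintro _ ⟨x, rfl⟩
    simpa [sub_eq_zero] using congrArg (· x) h
  ext x
  rw [rangeProjOp_eq_starProjection]
  simpa [sub_eq_zero] using hle (Submodule.starProjection_apply_mem _ x)

lemma eq_rangeProjOp {R B : H →L[ℂ] H} (hR : adjoint R = R) (hRB : R * B = B)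
    (hBR : rangeProjOp B * R = R) : R = rangeProjOp B := by
  calc R = R * rangeProjOp B := by
        rw [← hR, ← adjoint_rangeProjOp, ← adjoint_mul, hBR]
    _ = rangeProjOp B :=
        (mul_rangeProjOp_eq_of_mul_eq (Y := 1) (by rwa [one_mul])).trans (one_mul _)

lemma rangeProjOp_conj {A X : H →L[ℂ] H} (hA : adjoint A = A) (hXA : X * adjoint X * A = A) :
    rangeProjOp (adjoint X * A * X) = adjoint X * rangeProjOp A * X := by
  have hAX : A * X * adjoint X = A := by
    simpa [adjoint_mul, hA, mul_assoc] using congrArg adjoint hXA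
  refine (eq_rangeProjOp ?_ ?_ ?_).symm
  · simp [adjoint_mul, adjoint_rangeProjOp, mul_assoc]
  · calc adjoint X * rangeProjOp A * X * (adjoint X * A * X)
          = adjoint X * (rangeProjOp A * (X * adjoint X * A)) * X := by simp only [mul_assoc]
      _ = adjoint X * A * X := by rw [hXA, rangeProjOp_mul]
  · have h : rangeProjOp (adjoint X * A * X) * adjoint X * A = adjoint X * A :=
      calc rangeProjOp (adjoint X * A * X) * adjoint X * A
          = rangeProjOp (adjoint X * A * X) * adjoint X * (A * X * adjoint X) := by rw [hAX]
        _ = rangeProjOp (adjoint X * A * X) * (adjoint X * A * X) * adjoint X := by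
            simp only [mul_assoc]
        _ = adjoint X * A := by
            rw [rangeProjOp_mul, mul_assoc (adjoint X), mul_assoc (adjoint X), hAX]
    rw [← mul_assoc, ← mul_assoc, mul_rangeProjOp_eq_of_mul_eq h]

lemma mul_absOp_eq_of_mul_adjoint_eq {X B : H →L[ℂ] H} (h : X * adjoint B = adjoint B) :
    X * absOp B = absOp B := by
  rw [← rangeProjOp_adjoint_mul_absOp B, ← mul_assoc,
    mul_rangeProjOp_eq_of_mul_eq (Y := 1) (by rwa [one_mul]), one_mul]

lemma IsPartialIsometryOp.mul_adjoint_mul_self {U : H →L[ℂ] H} (hU : IsPartialIsometryOp U) :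
    U * (adjoint U * U) = U := by
  obtain ⟨hsa, hidem⟩ := hU
  rw [← sub_eq_zero, ← CStarRing.star_mul_self_eq_zero_iff, star_sub, star_mul, hsa.star_eq,
    star_eq_adjoint]
  calc (adjoint U * U * adjoint U - adjoint U) * (U * (adjoint U * U) - U)
      = adjoint U * U * (adjoint U * U) * (adjoint U * U) - adjoint U * U * (adjoint U * U)
          - adjoint U * U * (adjoint U * U) + adjoint U * U := by noncomm_ring
    _ = 0 := by rw [hidem, hidem]; abel

lemma isPartialIsometryOp_of_adjoint_mul_self_eq_rangeProjOp {U B : H →L[ℂ] H}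
    (h : adjoint U * U = rangeProjOp B) : IsPartialIsometryOp U := by
  rw [IsPartialIsometryOp, h]
  exact ⟨adjoint_rangeProjOp B, rangeProjOp_mul_self B⟩

namespace IsPolarDecompositionOp

variable {T U : H →L[ℂ] H}

lemma adjoint_mul_self_mul_absOp (h : IsPolarDecompositionOp T U) :
    adjoint U * U * absOp T = absOp T := by
  rw [h.2.2, rangeProjOp_adjoint_mul_absOp]

lemma absOp_mul_adjoint_mul_self (h : IsPolarDecompositionOp T U) :
    absOp T * (adjoint U * U) = absOp T := by
  simpa [adjoint_mul, adjoint_absOp, mul_assoc] using congrArg adjoint h.adjoint_mul_self_mul_absOp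

lemma absOp_adjoint (h : IsPolarDecompositionOp T U) :
    absOp (adjoint T) = U * absOp T * adjoint U := by
  refine absOp_eq_of_mul_self (star_right_conjugate_nonneg (absOp_nonneg T) U) ?_
  calc U * absOp T * adjoint U * (U * absOp T * adjoint U)
      = U * absOp T * (adjoint U * U * absOp T) * adjoint U := by simp only [mul_assoc]
    _ = U * absOp T * adjoint (U * absOp T) := by
        rw [h.adjoint_mul_self_mul_absOp, adjoint_mul, adjoint_absOp]; simp only [mul_assoc]
    _ = adjoint (adjoint T) * adjoint T := by rw [← h.1, adjoint_adjoint]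

lemma absOp_adjoint_mul (h : IsPolarDecompositionOp T U) : absOp (adjoint T) * U = T := by
  calc absOp (adjoint T) * U = U * (absOp T * (adjoint U * U)) := by
        rw [h.absOp_adjoint]; simp only [mul_assoc]
    _ = T := by rw [h.absOp_mul_adjoint_mul_self, ← h.1]

lemma mul_adjoint_mul_absOp_adjoint (h : IsPolarDecompositionOp T U) :
    U * adjoint U * absOp (adjoint T) = absOp (adjoint T) := by
  calc U * adjoint U * absOp (adjoint T) = U * (adjoint U * U * absOp T) * adjoint U := by
        rw [h.absOp_adjoint]; simp only [mul_assoc]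
    _ = absOp (adjoint T) := by rw [h.adjoint_mul_self_mul_absOp, h.absOp_adjoint]

lemma mul_adjoint_mul_absOp_mul_absOp_adjoint (h : IsPolarDecompositionOp T U) (X : H →L[ℂ] H) :
    U * adjoint U * absOp (X * absOp (adjoint T)) = absOp (X * absOp (adjoint T)) :=
  mul_absOp_eq_of_mul_adjoint_eq <| by
    rw [adjoint_mul, adjoint_absOp, ← mul_assoc, h.mul_adjoint_mul_absOp_adjoint]

lemma absOp_mul_eq_conj (h : IsPolarDecompositionOp T U) (X : H →L[ℂ] H) :
    absOp (X * T) = adjoint U * absOp (X * absOp (adjoint T)) * U := by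
  refine absOp_eq_of_mul_self (star_left_conjugate_nonneg (absOp_nonneg _) U) ?_
  calc adjoint U * absOp (X * absOp (adjoint T)) * U
        * (adjoint U * absOp (X * absOp (adjoint T)) * U)
      = adjoint U * absOp (X * absOp (adjoint T))
          * (U * adjoint U * absOp (X * absOp (adjoint T))) * U := by simp only [mul_assoc]
    _ = adjoint (absOp (adjoint T) * U) * (adjoint X * X) * (absOp (adjoint T) * U) := by
        rw [h.mul_adjoint_mul_absOp_mul_absOp_adjoint, mul_assoc (adjoint U), absOp_mul_absOp,
          adjoint_mul, adjoint_mul, adjoint_absOp]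
        simp only [mul_assoc]
    _ = adjoint (X * T) * (X * T) := by rw [h.absOp_adjoint_mul, adjoint_mul]; simp only [mul_assoc]

lemma adjoint_mul_self_mul {Y W : H →L[ℂ] H} (hT : IsPolarDecompositionOp T U)
    (hW : IsPolarDecompositionOp (absOp T * Y) W) : adjoint U * U * W = W := by
  have hWP : W * rangeProjOp (absOp (absOp T * Y)) = W := by
    rw [rangeProjOp_absOp, ← hW.2.2, hW.2.1.mul_adjoint_mul_self]
  have hWA : adjoint U * U * W * absOp (absOp T * Y) = W * absOp (absOp T * Y) := by
    rw [mul_assoc _ W, ← hW.1, ← mul_assoc, hT.adjoint_mul_self_mul_absOp]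
  rw [← hWP, ← mul_assoc]
  exact mul_rangeProjOp_eq_of_mul_eq hWA

end IsPolarDecompositionOp

/-- If `T = U|T|`, `S = V|S|` and `|T||S^*| = W | |T||S^*| |` are polar
decompositions, then `TS = (UWV)|TS|` is the polar decomposition of `TS`. -/
theorem polarDecomposition_mul (T S U V W : H →L[ℂ] H)
    (hT : IsPolarDecompositionOp T U) (hS : IsPolarDecompositionOp S V)
    (hW : IsPolarDecompositionOp (absOp T * absOp (adjoint S)) W) :
    IsPolarDecompositionOp (T * S) (U * W * V) := by
  have hVA := hS.mul_adjoint_mul_absOp_mul_absOp_adjoint (absOp T)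
  have habs : absOp (T * S) = adjoint V * absOp (absOp T * absOp (adjoint S)) * V := by
    rw [hS.absOp_mul_eq_conj, absOp_absOp_mul]
  have hproj : adjoint (U * W * V) * (U * W * V) = rangeProjOp (adjoint (T * S)) :=
    calc adjoint (U * W * V) * (U * W * V) = adjoint V * (adjoint W * (adjoint U * U * W)) * V := by
          simp only [adjoint_mul, mul_assoc]
      _ = adjoint V * rangeProjOp (absOp (absOp T * absOp (adjoint S))) * V := by
          rw [hT.adjoint_mul_self_mul hW, hW.2.2, rangeProjOp_absOp]
      _ = rangeProjOp (absOp (T * S)) := by rw [habs, rangeProjOp_conj (adjoint_absOp _) hVA]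
      _ = rangeProjOp (adjoint (T * S)) := rangeProjOp_absOp _
  refine ⟨?_, isPartialIsometryOp_of_adjoint_mul_self_eq_rangeProjOp hproj, hproj⟩
  calc T * S = U * (absOp T * absOp (adjoint S)) * V := by
        rw [mul_assoc U, mul_assoc, hS.absOp_adjoint_mul, ← mul_assoc, ← hT.1]
    _ = U * W * (V * adjoint V * absOp (absOp T * absOp (adjoint S))) * V := by
        conv_lhs => rw [hW.1]
        rw [hVA]
        simp only [mul_assoc]
    _ = U * W * V * absOp (T * S) := by rw [habs]; simp only [mul_assoc]
end

section
/- Let T be a bounded operator on a complex Hilbert space H with polar decomposition T = U|T|, and let n ∈ ℕ be such that U^n is a partial isometry. Then the following are equivalent: (i) (U^n)^*U^n commutes with UU^*; (ii) U^{n+1} is a partial isometry; (iii) U^n(U^n)^* commutes with U^*U. -/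
open ContinuousLinearMap

variable {H : Type*} [NormedAddCommGroup H] [InnerProductSpace ℂ H] [CompleteSpace H]

/-! A partial isometry of a C*-ring is an element `u` with `u^*u` idempotent, equivalently
`u u^*u = u`. With `q = (u^n)^*u^n` and `e = uu^*` one has
`u^{n+1}(u^{n+1})^*u^{n+1} = u^n (e q) u`, which is `u^{n+1}` as soon as `q` and `e` commute.
Conversely, that identity makes `qe` idempotent, and two projections with idempotent product
commute. Condition (iii) is condition (i) for `U^*`, since `U^{n+1}` is a partial isometry iff
its adjoint is. -/

section PartialIsometry

variable {A : Type*}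

def IsPartialIsometry [Mul A] [Star A] (u : A) : Prop :=
  IsIdempotentElem (star u * u)

section StarMonoid

variable [Monoid A] [StarMul A] {u : A}

lemma isPartialIsometry_of_mul_star_mul_self (h : u * (star u * u) = u) :
    IsPartialIsometry u := by
  rw [IsPartialIsometry, IsIdempotentElem, mul_assoc, h]

lemma isStarProjection_star_mul_self_iff :
    IsStarProjection (star u * u) ↔ IsPartialIsometry u :=
  ⟨IsStarProjection.isIdempotentElem, fun h => ⟨h, .star_mul_self u⟩⟩

end StarMonoid

section CStarRing

variable [NormedRing A] [StarRing A] [CStarRing A] {u : A}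

/-- With `p = u^*u` and `d = up - u`, one has `d^*d = p^3 - 2p^2 + p = 0`. -/
lemma IsPartialIsometry.mul_star_mul_self (h : IsPartialIsometry u) : u * (star u * u) = u := by
  have key : star (u * (star u * u) - u) * (u * (star u * u) - u)
      = star u * u * (star u * u * (star u * u)) - star u * u * (star u * u)
        - (star u * u * (star u * u) - star u * u) := by
    simp only [star_sub, star_mul, star_star]
    noncomm_ring
  rw [h.eq, h.eq, sub_self, CStarRing.star_mul_self_eq_zero_iff] at key
  exact sub_eq_zero.mp key

lemma isPartialIsometry_iff_mul_star_mul_self : IsPartialIsometry u ↔ u * (star u * u) = u :=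
  ⟨IsPartialIsometry.mul_star_mul_self, isPartialIsometry_of_mul_star_mul_self⟩

lemma IsPartialIsometry.star (h : IsPartialIsometry u) : IsPartialIsometry (star u) := by
  refine isPartialIsometry_of_mul_star_mul_self ?_
  simpa only [star_mul, star_star, mul_assoc] using congrArg Star.star h.mul_star_mul_self

@[simp]
lemma isPartialIsometry_star_iff : IsPartialIsometry (star u) ↔ IsPartialIsometry u :=
  ⟨fun h => star_star u ▸ h.star, IsPartialIsometry.star⟩

/-- With `x = pq - pqp`, idempotency of `pq` gives `x x^* = 0`, so `pq = pqp` is self-adjoint. -/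
lemma IsStarProjection.commute_of_isIdempotentElem_mul {p q : A} (hp : IsStarProjection p)
    (hq : IsStarProjection q) (hpq : IsIdempotentElem (p * q)) : Commute p q := by
  have hp' : star p = p := hp.isSelfAdjoint.star_eq
  have hq' : star q = q := hq.isSelfAdjoint.star_eq
  have hpp (x : A) : p * (p * x) = p * x := by rw [← mul_assoc, hp.isIdempotentElem.eq]
  have hqq (x : A) : q * (q * x) = q * x := by rw [← mul_assoc, hq.isIdempotentElem.eq]
  have hpqpq (x : A) : p * (q * (p * (q * x))) = p * (q * x) := by
    simpa only [mul_assoc] using congrArg (· * x) hpq.eq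
  have key : (p * q - p * q * p) * star (p * q - p * q * p) = 0 := by
    simp only [star_sub, star_mul, hp', hq', sub_mul, mul_sub, mul_assoc, hpp, hqq, hpqpq,
      sub_self]
  rw [CStarRing.mul_star_self_eq_zero_iff, sub_eq_zero] at key
  calc p * q = star (p * q) := by rw [key, star_mul, star_mul, hp', hq', mul_assoc]
    _ = q * p := by rw [star_mul, hp', hq']

theorem isPartialIsometry_pow_succ_iff_commute {n : ℕ} (hu : IsPartialIsometry u)
    (hn : IsPartialIsometry (u ^ n)) :
    IsPartialIsometry (u ^ (n + 1)) ↔ Commute (star (u ^ n) * u ^ n) (u * star u) := by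
  have hpow : u ^ (n + 1) * (star (u ^ (n + 1)) * u ^ (n + 1))
      = u ^ n * (u * star u * (star (u ^ n) * u ^ n) * u) := by
    rw [pow_succ, star_mul]; noncomm_ring
  rw [isPartialIsometry_iff_mul_star_mul_self, hpow]
  constructor
  · intro h
    refine (isStarProjection_star_mul_self_iff.mpr hn).commute_of_isIdempotentElem_mul
      (by simpa only [star_star] using isStarProjection_star_mul_self_iff.mpr hu.star) ?_
    calc star (u ^ n) * u ^ n * (u * star u) * (star (u ^ n) * u ^ n * (u * star u))
        = star (u ^ n) * (u ^ n * (u * star u * (star (u ^ n) * u ^ n) * u)) * star u := by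
          noncomm_ring
      _ = star (u ^ n) * u ^ n * (u * star u) := by rw [h]; noncomm_ring
  · intro h
    calc u ^ n * (u * star u * (star (u ^ n) * u ^ n) * u)
        = u ^ n * (star (u ^ n) * u ^ n) * (u * (star u * u)) := by rw [← h.eq]; noncomm_ring
      _ = u ^ (n + 1) := by rw [hn.mul_star_mul_self, hu.mul_star_mul_self, pow_succ]

theorem isPartialIsometry_pow_succ_iff_commute' {n : ℕ} (hu : IsPartialIsometry u)
    (hn : IsPartialIsometry (u ^ n)) :
    IsPartialIsometry (u ^ (n + 1)) ↔ Commute (u ^ n * star (u ^ n)) (star u * u) := by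
  have := isPartialIsometry_pow_succ_iff_commute (n := n) hu.star
    (by rwa [← star_pow, isPartialIsometry_star_iff])
  simpa only [← star_pow, star_star, isPartialIsometry_star_iff] using this

end CStarRing

end PartialIsometry

lemma isPartialIsometryOp_iff_isPartialIsometry (V : H →L[ℂ] H) :
    IsPartialIsometryOp V ↔ IsPartialIsometry V := by
  rw [← isStarProjection_star_mul_self_iff, isStarProjection_iff, star_eq_adjoint, and_comm]
  rfl

/-- If `U^n` is a partial isometry, the following are equivalent:
(i) `(U^n)^* U^n` commutes with `U U^*`; (ii) `U^{n+1}` is a partial isometry;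
(iii) `U^n (U^n)^*` commutes with `U^* U`. -/
theorem tfae_partialIsometry_pow_succ (T U : H →L[ℂ] H)
    (hT : IsPolarDecompositionOp T U) (n : ℕ)
    (hU : IsPartialIsometryOp (U ^ n)) :
    List.TFAE [Commute (adjoint (U ^ n) * U ^ n) (U * adjoint U),
      IsPartialIsometryOp (U ^ (n + 1)),
      Commute (U ^ n * adjoint (U ^ n)) (adjoint U * U)] := by
  have hU₁ : IsPartialIsometry U := (isPartialIsometryOp_iff_isPartialIsometry U).mp hT.2.1
  rw [isPartialIsometryOp_iff_isPartialIsometry] at hU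
  simp only [isPartialIsometryOp_iff_isPartialIsometry, ← star_eq_adjoint]
  tfae_have 2 ↔ 1 := isPartialIsometry_pow_succ_iff_commute hU₁ hU
  tfae_have 2 ↔ 3 := isPartialIsometry_pow_succ_iff_commute' hU₁ hU
  tfae_finish
end
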